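/- The Jacobi identity for theta functions holds: θ'(0, τ) = π θ₁(0, τ) θ₂(0, τ) θ₃(0, τ), where θ'(0,τ) denotes the derivative of θ(v,τ) in v at v = 0. -/

import Mathlib

open Complex

/-- `q = e^{2πiτ}`. -/
noncomputable def qnome (τ : ℂ) : ℂ := Complex.exp (2 * (Real.pi : ℂ) * Complex.I * τ)

/-- `q^{1/2} = e^{πiτ}`. -/
noncomputable def qhalf (τ : ℂ) : ℂ := Complex.exp ((Real.pi : ℂ) * Complex.I * τ)

/-- `θ(v,τ) = 2 q^{1/8} sin(πv) ∏_{j≥1} (1-q^j)(1-e^{2πiv}q^j)(1-e^{-2πiv}q^j)`. -/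
noncomputable def jacobiTheta0 (v τ : ℂ) : ℂ :=
  2 * Complex.exp ((Real.pi : ℂ) * Complex.I * τ / 4) * Complex.sin ((Real.pi : ℂ) * v) *
    ∏' j : ℕ, ((1 - qnome τ ^ (j + 1)) *
      (1 - Complex.exp (2 * (Real.pi : ℂ) * Complex.I * v) * qnome τ ^ (j + 1)) *
      (1 - Complex.exp (-(2 * (Real.pi : ℂ) * Complex.I * v)) * qnome τ ^ (j + 1)))

/-- `θ₁(v,τ) = 2 q^{1/8} cos(πv) ∏_{j≥1} (1-q^j)(1+e^{2πiv}q^j)(1+e^{-2πiv}q^j)`. -/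
noncomputable def jacobiTheta1 (v τ : ℂ) : ℂ :=
  2 * Complex.exp ((Real.pi : ℂ) * Complex.I * τ / 4) * Complex.cos ((Real.pi : ℂ) * v) *
    ∏' j : ℕ, ((1 - qnome τ ^ (j + 1)) *
      (1 + Complex.exp (2 * (Real.pi : ℂ) * Complex.I * v) * qnome τ ^ (j + 1)) *
      (1 + Complex.exp (-(2 * (Real.pi : ℂ) * Complex.I * v)) * qnome τ ^ (j + 1)))

/-- `θ₂(v,τ) = ∏_{j≥1} (1-q^j)(1-e^{2πiv}q^{j-1/2})(1-e^{-2πiv}q^{j-1/2})`. -/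
noncomputable def jacobiTheta2 (v τ : ℂ) : ℂ :=
  ∏' j : ℕ, ((1 - qnome τ ^ (j + 1)) *
    (1 - Complex.exp (2 * (Real.pi : ℂ) * Complex.I * v) * qhalf τ ^ (2 * j + 1)) *
    (1 - Complex.exp (-(2 * (Real.pi : ℂ) * Complex.I * v)) * qhalf τ ^ (2 * j + 1)))

/-- `θ₃(v,τ) = ∏_{j≥1} (1-q^j)(1+e^{2πiv}q^{j-1/2})(1+e^{-2πiv}q^{j-1/2})`. -/
noncomputable def jacobiTheta3 (v τ : ℂ) : ℂ :=
  ∏' j : ℕ, ((1 - qnome τ ^ (j + 1)) *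
    (1 + Complex.exp (2 * (Real.pi : ℂ) * Complex.I * v) * qhalf τ ^ (2 * j + 1)) *
    (1 + Complex.exp (-(2 * (Real.pi : ℂ) * Complex.I * v)) * qhalf τ ^ (2 * j + 1)))

/-!
Write `θ(v) = 2 q^{1/8} sin(πv) P(v)`, where `P(v) = G(1) G(e^{2πiv}) G(e^{-2πiv})` and
`G(w) = ∏ (1 - w q^n)` is entire. Since `sin 0 = 0`, `θ'(0) = 2π q^{1/8} P(0) = 2π q^{1/8} ∏ (1 - q^n)³`.
At `v = 0` the right-hand side equals `2π q^{1/8} ∏ (1 - q^n)³ · (∏ (1 + q^n)(1 - q^{n-1/2})(1 + q^{n-1/2}))²`,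
and the bracket is `∏ (1 + q^n) ∏ (1 - q^{2n-1}) = 1` by Euler's identity.
-/

open Function
open scoped Real

section InfiniteProducts

variable {ι : Type*}

lemma Multipliable.tprod_mul₃ {M : Type*} [CommMonoid M] [TopologicalSpace M] [ContinuousMul M]
    [T2Space M] {f g h : ι → M} (hf : Multipliable f) (hg : Multipliable g)
    (hh : Multipliable h) :
    ∏' i, f i * g i * h i = (∏' i, f i) * (∏' i, g i) * ∏' i, h i := by
  rw [(hf.mul hg).tprod_mul hh, hf.tprod_mul hg]

variable {R : Type*} [NormedCommRing R] [NormOneClass R]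

lemma multipliable_one_sub_of_summable [CompleteSpace R] {f : ι → R}
    (hf : Summable fun i ↦ ‖f i‖) : Multipliable fun i ↦ 1 - f i := by
  simpa [sub_eq_add_neg] using multipliable_one_add_of_summable (f := fun i ↦ -f i) (by simpa)

lemma summable_norm_pow_comp {x : R} (hx : ‖x‖ < 1) {e : ℕ → ℕ} (he : Injective e) :
    Summable fun n ↦ ‖x ^ e n‖ :=
  .of_nonneg_of_le (fun _ ↦ norm_nonneg _) (fun n ↦ norm_pow_le x (e n))
    ((summable_geometric_of_lt_one (norm_nonneg x) hx).comp_injective he)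

lemma differentiable_tprod_one_sub_mul {a : ι → ℂ} (ha : Summable fun i ↦ ‖a i‖) :
    Differentiable ℂ fun w ↦ ∏' i, (1 - w * a i) := by
  intro w
  set U := Metric.ball (0 : ℂ) (‖w‖ + 1)
  have hbound (i : ι) : ∀ z ∈ U, ‖-(z * a i)‖ ≤ (‖w‖ + 1) * ‖a i‖ := fun z hz ↦ by
    rw [norm_neg, norm_mul]
    exact mul_le_mul_of_nonneg_right (mem_ball_zero_iff.mp hz).le (norm_nonneg _)
  have hprod := Summable.hasProdLocallyUniformlyOn_one_add Metric.isOpen_ball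
    (ha.mul_left _) (.of_forall hbound) fun i ↦ by fun_prop
  have hdiff : DifferentiableOn ℂ (fun z ↦ ∏' i, (1 + -(z * a i))) U :=
    hprod.differentiableOn (.of_forall fun s ↦ by
      simpa [Finset.prod_fn] using DifferentiableOn.finsetProd fun i _ ↦ by fun_prop)
      Metric.isOpen_ball
  simp only [← sub_eq_add_neg] at hdiff
  exact hdiff.differentiableAt (Metric.isOpen_ball.mem_nhds (by simp))

variable {𝕜 : Type*} [NormedField 𝕜] [CompleteSpace 𝕜]

lemma tprod_one_add_pow_mul_tprod_one_sub_pow_odd {q : 𝕜} (hq : ‖q‖ < 1) :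
    (∏' n : ℕ, (1 + q ^ (n + 1))) * ∏' n : ℕ, (1 - q ^ (2 * n + 1)) = 1 := by
  have hsum {e : ℕ → ℕ} (he : Injective e) := summable_norm_pow_comp hq he
  have hsucc : Injective fun n ↦ n + 1 := add_left_injective 1
  have hodd : Injective fun n ↦ 2 * n + 1 := fun m n h ↦ by simp at h; omega
  have heven : Injective fun n ↦ 2 * n + 2 := fun m n h ↦ by simp at h; omega
  have hne : ∏' n : ℕ, (1 - q ^ (2 * n + 2)) ≠ 0 := by
    have hfactor (n : ℕ) : 1 + -q ^ (2 * n + 2) ≠ 0 := by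
      rw [← sub_eq_add_neg, sub_ne_zero]
      refine fun h ↦ (pow_lt_one₀ (norm_nonneg q) hq (by omega : 2 * n + 2 ≠ 0)).ne ?_
      rw [← norm_pow, ← h, norm_one]
    simpa [sub_eq_add_neg] using
      tprod_one_add_ne_zero_of_summable hfactor (by simpa using hsum heven)
  -- `(1 + q^n)(1 - q^n) = 1 - q^(2n)`, and `∏ (1 - q^n)` splits into odd and even `n`.
  have hsplit : (∏' n : ℕ, (1 - q ^ (2 * n + 1))) * ∏' n : ℕ, (1 - q ^ (2 * n + 2)) =
      ∏' n : ℕ, (1 - q ^ (n + 1)) :=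
    tprod_even_mul_odd (f := fun n ↦ 1 - q ^ (n + 1))
      (multipliable_one_sub_of_summable (hsum hodd))
      (by simpa [add_assoc] using multipliable_one_sub_of_summable (hsum heven))
  have hplus_minus : (∏' n : ℕ, (1 + q ^ (n + 1))) * ∏' n : ℕ, (1 - q ^ (n + 1)) =
      ∏' n : ℕ, (1 - q ^ (2 * n + 2)) := by
    rw [← (multipliable_one_add_of_summable (hsum hsucc)).tprod_mul
      (multipliable_one_sub_of_summable (hsum hsucc))]
    exact tprod_congr fun n ↦ by ring
  refine mul_right_cancel₀ hne ?_
  rw [one_mul, mul_assoc, hsplit, hplus_minus]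

end InfiniteProducts

section JacobiTheta

variable {τ : ℂ}

lemma qhalf_sq (τ : ℂ) : qhalf τ ^ 2 = qnome τ := by
  rw [qhalf, qnome, ← Complex.exp_nat_mul]
  ring_nf

lemma norm_qhalf_lt_one (hτ : 0 < τ.im) : ‖qhalf τ‖ < 1 := by
  rw [qhalf, norm_exp, Real.exp_lt_one_iff]
  simpa using mul_pos Real.pi_pos hτ

lemma norm_qnome_lt_one (hτ : 0 < τ.im) : ‖qnome τ‖ < 1 := by
  rw [← qhalf_sq, norm_pow]
  exact pow_lt_one₀ (norm_nonneg _) (norm_qhalf_lt_one hτ) two_ne_zero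

lemma summable_norm_qnome_pow (hτ : 0 < τ.im) : Summable fun j : ℕ ↦ ‖qnome τ ^ (j + 1)‖ :=
  summable_norm_pow_comp (norm_qnome_lt_one hτ) (add_left_injective 1)

lemma summable_norm_qhalf_pow (hτ : 0 < τ.im) :
    Summable fun j : ℕ ↦ ‖qhalf τ ^ (2 * j + 1)‖ :=
  summable_norm_pow_comp (norm_qhalf_lt_one hτ) fun m n h ↦ by simp at h; omega

lemma hasDerivAt_jacobiTheta0_zero (hτ : 0 < τ.im) :
    HasDerivAt (jacobiTheta0 · τ)
      (2 * exp (π * I * τ / 4) * π * (∏' j : ℕ, (1 - qnome τ ^ (j + 1))) ^ 3) 0 := by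
  have hsum := summable_norm_qnome_pow hτ
  have hmul (x : ℂ) : Multipliable fun j : ℕ ↦ 1 - x * qnome τ ^ (j + 1) :=
    multipliable_one_sub_of_summable (by simpa [norm_mul] using hsum.mul_left ‖x‖)
  set G : ℂ → ℂ := fun w ↦ ∏' j : ℕ, (1 - w * qnome τ ^ (j + 1))
  have hG : Differentiable ℂ G := differentiable_tprod_one_sub_mul hsum
  have htheta : (jacobiTheta0 · τ) = fun v ↦ 2 * exp (π * I * τ / 4) * sin (π * v) *
      (G 1 * G (exp (2 * π * I * v)) * G (exp (-(2 * π * I * v)))) := by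
    funext v
    rw [jacobiTheta0, ← (hmul 1).tprod_mul₃ (hmul _) (hmul _)]
    simp only [one_mul]
  have hsin : HasDerivAt (fun v : ℂ ↦ 2 * exp (π * I * τ / 4) * sin (π * v))
      (2 * exp (π * I * τ / 4) * π) 0 := by
    simpa using (((hasDerivAt_id (0 : ℂ)).const_mul (π : ℂ)).csin).const_mul
      (2 * exp (π * I * τ / 4))
  have hP : DifferentiableAt ℂ
      (fun v ↦ G 1 * G (exp (2 * π * I * v)) * G (exp (-(2 * π * I * v)))) 0 := by
    fun_prop
  rw [htheta]
  refine (hsin.fun_mul hP.hasDerivAt).congr_deriv ?_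
  simp only [G, mul_zero, neg_zero, exp_zero, one_mul, sin_zero, zero_mul, add_zero]
  ring

lemma jacobiTheta1_zero (hτ : 0 < τ.im) :
    jacobiTheta1 0 τ = 2 * exp (π * I * τ / 4) * (∏' j : ℕ, (1 - qnome τ ^ (j + 1))) *
      (∏' j : ℕ, (1 + qnome τ ^ (j + 1))) ^ 2 := by
  have hsum := summable_norm_qnome_pow hτ
  have hplus : Multipliable fun j : ℕ ↦ 1 + qnome τ ^ (j + 1) :=
    multipliable_one_add_of_summable hsum
  simp only [jacobiTheta1, mul_zero, neg_zero, exp_zero, cos_zero, one_mul, mul_one]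
  rw [(multipliable_one_sub_of_summable hsum).tprod_mul₃ hplus hplus]
  ring

lemma jacobiTheta2_zero (hτ : 0 < τ.im) :
    jacobiTheta2 0 τ = (∏' j : ℕ, (1 - qnome τ ^ (j + 1))) *
      (∏' j : ℕ, (1 - qhalf τ ^ (2 * j + 1))) ^ 2 := by
  have hminus : Multipliable fun j : ℕ ↦ 1 - qhalf τ ^ (2 * j + 1) :=
    multipliable_one_sub_of_summable (summable_norm_qhalf_pow hτ)
  simp only [jacobiTheta2, mul_zero, neg_zero, exp_zero, one_mul]
  rw [(multipliable_one_sub_of_summable (summable_norm_qnome_pow hτ)).tprod_mul₃ hminus hminus]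
  ring

lemma jacobiTheta3_zero (hτ : 0 < τ.im) :
    jacobiTheta3 0 τ = (∏' j : ℕ, (1 - qnome τ ^ (j + 1))) *
      (∏' j : ℕ, (1 + qhalf τ ^ (2 * j + 1))) ^ 2 := by
  have hplus : Multipliable fun j : ℕ ↦ 1 + qhalf τ ^ (2 * j + 1) :=
    multipliable_one_add_of_summable (summable_norm_qhalf_pow hτ)
  simp only [jacobiTheta3, mul_zero, neg_zero, exp_zero, one_mul]
  rw [(multipliable_one_sub_of_summable (summable_norm_qnome_pow hτ)).tprod_mul₃ hplus hplus]
  ring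

lemma tprod_one_sub_qhalf_pow_mul_tprod_one_add_qhalf_pow (hτ : 0 < τ.im) :
    (∏' j : ℕ, (1 - qhalf τ ^ (2 * j + 1))) * ∏' j : ℕ, (1 + qhalf τ ^ (2 * j + 1)) =
      ∏' j : ℕ, (1 - qnome τ ^ (2 * j + 1)) := by
  rw [← (multipliable_one_sub_of_summable (summable_norm_qhalf_pow hτ)).tprod_mul
    (multipliable_one_add_of_summable (summable_norm_qhalf_pow hτ))]
  exact tprod_congr fun j ↦ by rw [← qhalf_sq]; ring

end JacobiTheta

/-- The Jacobi identity `θ'(0,τ) = π θ₁(0,τ) θ₂(0,τ) θ₃(0,τ)`. -/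
theorem jacobi_identity (τ : ℂ) (hτ : 0 < τ.im) :
    deriv (fun v => jacobiTheta0 v τ) 0 =
      (Real.pi : ℂ) * jacobiTheta1 0 τ * jacobiTheta2 0 τ * jacobiTheta3 0 τ := by
  have heuler := tprod_one_add_pow_mul_tprod_one_sub_pow_odd (norm_qnome_lt_one hτ)
  rw [← tprod_one_sub_qhalf_pow_mul_tprod_one_add_qhalf_pow hτ] at heuler
  rw [(hasDerivAt_jacobiTheta0_zero hτ).deriv, jacobiTheta1_zero hτ, jacobiTheta2_zero hτ,
    jacobiTheta3_zero hτ]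
  set D := ∏' j : ℕ, (1 - qnome τ ^ (j + 1))
  set A := ∏' j : ℕ, (1 + qnome τ ^ (j + 1))
  set B := ∏' j : ℕ, (1 - qhalf τ ^ (2 * j + 1))
  set C := ∏' j : ℕ, (1 + qhalf τ ^ (2 * j + 1))
  linear_combination (-2 * exp (π * I * τ / 4) * π * D ^ 3 * (A * (B * C) + 1)) * heuler
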